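/- Nested application of rules is sound: for every context S{·} (a nested sequent with one hole in consequent position) and all 𝓛-formulas A and B, if A ⊃ B is Q.L-valid, then fm(S{∅; ⇒ A}) ⊃ fm(S{∅; ⇒ B}) is Q.L-valid, where S{∅; ⇒ C} denotes the nested sequent obtained by plugging the sequent with empty signature, empty antecedent, and consequent C into the hole of S{·}. -/

import Mathlib

set_option maxHeartbeats 1000000

namespace NQML

/-! ## The first-order modal language 𝓛 -/

/-- Formulas of the first-order modal language 𝓛:
`A ::= R i (x₁,…,xₙ) | x = y | ⊥ | A ⊃ A | ∀x A | □A`, variables are natural numbers. -/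
inductive Fml : Type
  | rel : ℕ → List ℕ → Fml
  | eq  : ℕ → ℕ → Fml
  | bot : Fml
  | imp : Fml → Fml → Fml
  | all : ℕ → Fml → Fml
  | box : Fml → Fml
  deriving DecidableEq

namespace Fml

/-- Atomic formulas. -/
def Atomic : Fml → Prop
  | rel _ _ => True
  | eq _ _  => True
  | _       => False

/-- Free variables of a formula. -/
def fv : Fml → Finset ℕ
  | rel _ l => l.toFinset
  | eq a b  => {a, b}
  | bot     => ∅
  | imp A B => fv A ∪ fv B
  | all z A => (fv A).erase z
  | box A   => fv A

/-- Capture-avoiding application of a renaming `σ` to the free variables of a formula;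
bound variables are renamed when a capture would occur. -/
def substF : (ℕ → ℕ) → Fml → Fml
  | σ, rel n l => rel n (l.map σ)
  | σ, eq a b  => eq (σ a) (σ b)
  | _, bot     => bot
  | σ, imp A B => imp (substF σ A) (substF σ B)
  | σ, box A   => box (substF σ A)
  | σ, all z A =>
      let captured := ((fv A).erase z).image σ
      let z' := if z ∈ captured then captured.sup id + 1 else z
      all z' (substF (Function.update σ z z') A)

/-- `A.sub y x` is `A(y/x)`: the capture-avoiding substitution of `y` for the free
occurrences of `x` in `A`. -/
def sub (A : Fml) (y x : ℕ) : Fml := substF (fun v => if v = x then y else v) A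

/-- Defined connectives. -/
def neg (A : Fml) : Fml := imp A bot
def top : Fml := imp bot bot
def conj (A B : Fml) : Fml := neg (imp A (neg B))
def disj (A B : Fml) : Fml := imp (neg A) B
def ex (x : ℕ) (A : Fml) : Fml := neg (all x (neg A))

/-- The existence predicate `𝓔 x := ∃ y (y = x)` (with `y` a variable distinct from `x`). -/
def Epred (x : ℕ) : Fml := ex (x + 1) (eq (x + 1) x)

end Fml

/-! ## Nested sequents -/

mutual
  /-- Nested sequents `S ::= X;Γ⇒Δ | S,[S],…,[S]`: a node carries a signature `X`
  (a multiset of variables), an antecedent `Γ` and a succedent `Δ` (multisets of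
  formulas), and a list of bracketed nested sequents. -/
  inductive NSeq : Type
    | node : Multiset ℕ → Multiset Fml → Multiset Fml → NSeqs → NSeq
  /-- Lists of nested sequents. -/
  inductive NSeqs : Type
    | nil  : NSeqs
    | cons : NSeq → NSeqs → NSeqs
end

namespace NSeqs
def append : NSeqs → NSeqs → NSeqs
  | nil, t => t
  | cons s ss, t => cons s (append ss t)
end NSeqs

instance : Append NSeqs := ⟨NSeqs.append⟩

/-- Merging two nested sequents at the root. -/
def NSeq.merge : NSeq → NSeq → NSeq
  | .node X Γ Δ cs, .node Y Φ Ψ ds => .node (X + Y) (Γ + Φ) (Δ + Ψ) (cs ++ ds)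

/-- Free variables of a multiset of formulas. -/
def msFv (Γ : Multiset Fml) : Finset ℕ := (Γ.map Fml.fv).sup

mutual
  /-- Variables occurring (in the signature or free in a formula) in a nested sequent. -/
  def NSeq.fv : NSeq → Finset ℕ
    | .node X Γ Δ cs => X.toFinset ∪ msFv Γ ∪ msFv Δ ∪ NSeqs.fv cs
  def NSeqs.fv : NSeqs → Finset ℕ
    | .nil => ∅
    | .cons s ss => NSeq.fv s ∪ NSeqs.fv ss
end

mutual
  /-- Componentwise application of a renaming to a nested sequent. -/
  def NSeq.subst : NSeq → (ℕ → ℕ) → NSeq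
    | .node X Γ Δ cs, σ =>
        .node (X.map σ) (Γ.map (Fml.substF σ)) (Δ.map (Fml.substF σ)) (NSeqs.subst cs σ)
  def NSeqs.subst : NSeqs → (ℕ → ℕ) → NSeqs
    | .nil, _ => .nil
    | .cons s ss, σ => .cons (NSeq.subst s σ) (NSeqs.subst ss σ)
end

/-! ## Contexts -/

mutual
  /-- Contexts: nested sequents with holes in consequent position.  A node records
  how many holes occur at that node together with the bracketed sub-contexts. -/
  inductive NCtx : Type
    | node : Multiset ℕ → Multiset Fml → Multiset Fml → ℕ → NCtxs → NCtx
  inductive NCtxs : Type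
    | nil  : NCtxs
    | cons : NCtx → NCtxs → NCtxs
end

namespace NCtxs
def append : NCtxs → NCtxs → NCtxs
  | nil, t => t
  | cons c cs, t => cons c (append cs t)
end NCtxs

instance : Append NCtxs := ⟨NCtxs.append⟩

mutual
  /-- The number of holes of a context. -/
  def NCtx.holes : NCtx → ℕ
    | .node _ _ _ k cs => k + NCtxs.holes cs
  def NCtxs.holes : NCtxs → ℕ
    | .nil => 0
    | .cons c cs => NCtx.holes c + NCtxs.holes cs
end

mutual
  /-- The list of depths of the holes of a context (in the order in which they are filled). -/
  def NCtx.holeDepths : NCtx → List ℕ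
    | .node _ _ _ k cs => List.replicate k 0 ++ (NCtxs.holeDepths cs).map (· + 1)
  def NCtxs.holeDepths : NCtxs → List ℕ
    | .nil => []
    | .cons c cs => NCtx.holeDepths c ++ NCtxs.holeDepths cs
end

mutual
  /-- Filling the holes of a context with a list of nested sequents: each nested sequent
  is merged at the node where the corresponding hole occurs. -/
  def NCtx.fill : NCtx → List NSeq → NSeq
    | .node X Γ Δ k cs, L =>
        (L.take k).foldl NSeq.merge (.node X Γ Δ (NCtxs.fill cs (L.drop k)))
  def NCtxs.fill : NCtxs → List NSeq → NSeqs
    | .nil, _ => .nil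
    | .cons c cs, L =>
        .cons (NCtx.fill c (L.take (NCtx.holes c))) (NCtxs.fill cs (L.drop (NCtx.holes c)))
end

/-- Merging two contexts at the root. -/
def NCtx.mergeC : NCtx → NCtx → NCtx
  | .node X Γ Δ k cs, .node Y Φ Ψ j ds => .node (X + Y) (Γ + Φ) (Δ + Ψ) (k + j) (cs ++ ds)

mutual
  /-- Plugging a context into the first hole of a context. -/
  def NCtx.plug : NCtx → NCtx → NCtx
    | .node X Γ Δ k cs, D =>
        if k = 0 then .node X Γ Δ k (NCtxs.plug cs D)
        else NCtx.mergeC (.node X Γ Δ (k - 1) cs) D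
  def NCtxs.plug : NCtxs → NCtx → NCtxs
    | .nil, _ => .nil
    | .cons c cs, D =>
        if NCtx.holes c = 0 then .cons c (NCtxs.plug cs D) else .cons (NCtx.plug c D) cs
end

/-! ## Frames, axioms and proper closure -/

/-- The axioms D, T, B, 4, 5, CBF, BF, UI. -/
inductive Ax : Type
  | D | T | B | four | five | cbf | bf | ui
  deriving DecidableEq

/-- A frame `⟨W, R, D⟩` with worlds `W`, accessibility `Rel` and domains `Dom` over a
universe `U` of objects; some world has a nonempty domain. -/
structure Frame (W U : Type) : Type where
  Rel : W → W → Prop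
  Dom : W → Set U
  nonempty : Nonempty W
  dom_nonempty : ∃ w, (Dom w).Nonempty

/-- The frame/domain condition corresponding to each axiom. -/
def Frame.sat {W U : Type} (F : Frame W U) : Ax → Prop
  | .D    => ∀ w, ∃ v, F.Rel w v
  | .T    => ∀ w, F.Rel w w
  | .B    => ∀ w v, F.Rel w v → F.Rel v w
  | .four => ∀ w v u, F.Rel w v → F.Rel v u → F.Rel w u
  | .five => ∀ w v u, F.Rel w v → F.Rel w u → F.Rel v u
  | .cbf  => ∀ w v, F.Rel w v → F.Dom w ⊆ F.Dom v
  | .bf   => ∀ w v, F.Rel w v → F.Dom v ⊆ F.Dom w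
  | .ui   => ∀ w v, F.Dom w = F.Dom v

/-- A `Q.L`-frame: a frame satisfying the conditions of all axioms in `L`. -/
def FrameFor {W U : Type} (F : Frame W U) (L : Set Ax) : Prop := ∀ a ∈ L, F.sat a

/-- `L` is properly closed: whenever every `Q.L`-frame satisfies the frame condition of an
axiom among 4, 5, CBF, BF, that axiom belongs to `L`. -/
def ProperlyClosed (L : Set Ax) : Prop :=
  ∀ a ∈ ({Ax.four, Ax.five, Ax.cbf, Ax.bf} : Set Ax),
    (∀ (W U : Type) (F : Frame W U), FrameFor F L → F.sat a) → a ∈ L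

/-! ## Models, satisfaction, validity and the formula interpretation -/

/-- A model: a frame together with a valuation interpreting each `n`-ary relation symbol
at each world by tuples of objects from the union of the domains. -/
structure Model (W U : Type) extends Frame W U where
  Val : W → ℕ → List U → Prop
  val_dom : ∀ w i l, Val w i l → ∀ u ∈ l, ∃ v, u ∈ Dom v

/-- Satisfaction of a formula at a world under an assignment (variables are rigid). -/
def Model.sat {W U : Type} (M : Model W U) : (ℕ → U) → W → Fml → Prop
  | σ, w, .rel i l => M.Val w i (l.map σ)
  | σ, _, .eq a b  => σ a = σ b
  | _, _, .bot     => False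
  | σ, w, .imp A B => M.sat σ w A → M.sat σ w B
  | σ, w, .all x A => ∀ u ∈ M.Dom w, M.sat (Function.update σ x u) w A
  | σ, w, .box A   => ∀ v, M.Rel w v → M.sat σ v A

/-- An assignment maps every variable into the union of the domains. -/
def Assign {W U : Type} (M : Model W U) (σ : ℕ → U) : Prop := ∀ x, ∃ w, σ x ∈ M.Dom w

/-- `Q.L`-validity: truth at every world of every model on a `Q.L`-frame under every
assignment. -/
def Valid (L : Set Ax) (A : Fml) : Prop :=
  ∀ (W U : Type) (M : Model W U), FrameFor M.toFrame L →
    ∀ σ, Assign M σ → ∀ w, M.sat σ w A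

/-- Iterated conjunction and disjunction. -/
def listConj : List Fml → Fml
  | [] => Fml.top
  | A :: l => Fml.conj A (listConj l)

def listDisj : List Fml → Fml
  | [] => Fml.bot
  | A :: l => Fml.disj A (listDisj l)

mutual
  /-- The formula interpretation of a nested sequent:
  `fm(X;Γ⇒Δ,[S₁],…,[Sₙ]) = (⋀_{x∈X} 𝓔x ∧ ⋀Γ ⊃ ⋁Δ) ∨ ⋁ₖ □ fm(Sₖ)`. -/
  noncomputable def NSeq.fm : NSeq → Fml
    | .node X Γ Δ cs =>
        Fml.disj
          (Fml.imp (Fml.conj (listConj (X.toList.map Fml.Epred)) (listConj Γ.toList))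
            (listDisj Δ.toList))
          (NSeqs.fmDisj cs)
  noncomputable def NSeqs.fmDisj : NSeqs → Fml
    | .nil => Fml.bot
    | .cons s ss => Fml.disj (Fml.box (NSeq.fm s)) (NSeqs.fmDisj ss)
end

/-! ## The nested calculus NQ.L -/

/-- A single rule application (instance) of the nested calculus `NQ.L`: `Step L ps S`
says that `S` can be inferred from the list of premisses `ps` by one rule of `NQ.L`. -/
inductive Step (L : Set Ax) : List NSeq → NSeq → Prop
  /-- Initial sequents `S{X; P,Γ ⇒ Δ,P}` with `P` atomic. -/
  | init (C : NCtx) (X : Multiset ℕ) (Γ Δ : Multiset Fml) (P : Fml) :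
      C.holes = 1 → P.Atomic →
      Step L [] (C.fill [.node X (P ::ₘ Γ) (P ::ₘ Δ) .nil])
  /-- `L⊥`. -/
  | botL (C : NCtx) (X : Multiset ℕ) (Γ Δ : Multiset Fml) :
      C.holes = 1 →
      Step L [] (C.fill [.node X (Fml.bot ::ₘ Γ) Δ .nil])
  /-- `L⊃`. -/
  | impL (C : NCtx) (X : Multiset ℕ) (Γ Δ : Multiset Fml) (A B : Fml) :
      C.holes = 1 →
      Step L [C.fill [.node X Γ (A ::ₘ Δ) .nil], C.fill [.node X (B ::ₘ Γ) Δ .nil]]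
        (C.fill [.node X (Fml.imp A B ::ₘ Γ) Δ .nil])
  /-- `R⊃`. -/
  | impR (C : NCtx) (X : Multiset ℕ) (Γ Δ : Multiset Fml) (A B : Fml) :
      C.holes = 1 →
      Step L [C.fill [.node X (A ::ₘ Γ) (B ::ₘ Δ) .nil]]
        (C.fill [.node X Γ (Fml.imp A B ::ₘ Δ) .nil])
  /-- `L∀`. -/
  | allL (C : NCtx) (X : Multiset ℕ) (Γ Δ : Multiset Fml) (x z : ℕ) (A : Fml) :
      C.holes = 1 →
      Step L [C.fill [.node (z ::ₘ X) (A.sub z x ::ₘ Fml.all x A ::ₘ Γ) Δ .nil]]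
        (C.fill [.node (z ::ₘ X) (Fml.all x A ::ₘ Γ) Δ .nil])
  /-- `R∀` with `y` fresh. -/
  | allR (C : NCtx) (X : Multiset ℕ) (Γ Δ : Multiset Fml) (x y : ℕ) (A : Fml) :
      C.holes = 1 → y ∉ NSeq.fv (C.fill [.node X Γ (Fml.all x A ::ₘ Δ) .nil]) →
      Step L [C.fill [.node (y ::ₘ X) Γ (A.sub y x ::ₘ Δ) .nil]]
        (C.fill [.node X Γ (Fml.all x A ::ₘ Δ) .nil])
  /-- `L□`. -/
  | boxL (C : NCtx) (X Y : Multiset ℕ) (Γ Δ Φ Ψ : Multiset Fml) (ts : NSeqs) (A : Fml) :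
      C.holes = 1 →
      Step L [C.fill [.node X (Fml.box A ::ₘ Γ) Δ (.cons (.node Y (A ::ₘ Φ) Ψ ts) .nil)]]
        (C.fill [.node X (Fml.box A ::ₘ Γ) Δ (.cons (.node Y Φ Ψ ts) .nil)])
  /-- `R□`. -/
  | boxR (C : NCtx) (X : Multiset ℕ) (Γ Δ : Multiset Fml) (A : Fml) :
      C.holes = 1 →
      Step L [C.fill [.node X Γ Δ (.cons (.node 0 0 {A} .nil) .nil)]]
        (C.fill [.node X Γ (Fml.box A ::ₘ Δ) .nil])
  /-- `Ref`. -/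
  | ref (C : NCtx) (X : Multiset ℕ) (Γ Δ : Multiset Fml) (x : ℕ) :
      C.holes = 1 →
      Step L [C.fill [.node X (Fml.eq x x ::ₘ Γ) Δ .nil]] (C.fill [.node X Γ Δ .nil])
  /-- `Repl` (with `P` atomic). -/
  | repl (C : NCtx) (X : Multiset ℕ) (Γ Δ : Multiset Fml) (x y z : ℕ) (P : Fml) :
      C.holes = 1 → P.Atomic →
      Step L [C.fill [.node X (P.sub y z ::ₘ Fml.eq x y ::ₘ P.sub x z ::ₘ Γ) Δ .nil]]
        (C.fill [.node X (Fml.eq x y ::ₘ P.sub x z ::ₘ Γ) Δ .nil])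
  /-- `Repl_X`. -/
  | replX (C : NCtx) (X : Multiset ℕ) (Γ Δ : Multiset Fml) (x y : ℕ) :
      C.holes = 1 →
      Step L [C.fill [.node (x ::ₘ y ::ₘ X) (Fml.eq x y ::ₘ Γ) Δ .nil]]
        (C.fill [.node (x ::ₘ X) (Fml.eq x y ::ₘ Γ) Δ .nil])
  /-- `Rig`. -/
  | rig (C : NCtx) (X Y : Multiset ℕ) (Γ Δ Φ Ψ : Multiset Fml) (x y : ℕ) :
      C.holes = 2 →
      Step L [C.fill [.node X (Fml.eq x y ::ₘ Γ) Δ .nil, .node Y (Fml.eq x y ::ₘ Φ) Ψ .nil]]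
        (C.fill [.node X (Fml.eq x y ::ₘ Γ) Δ .nil, .node Y Φ Ψ .nil])
  /-- `R_D`. -/
  | rD (C : NCtx) (X : Multiset ℕ) (Γ Δ : Multiset Fml) :
      Ax.D ∈ L → C.holes = 1 →
      Step L [C.fill [.node X Γ Δ (.cons (.node 0 0 0 .nil) .nil)]]
        (C.fill [.node X Γ Δ .nil])
  /-- `R_T`. -/
  | rT (C : NCtx) (X : Multiset ℕ) (Γ Δ : Multiset Fml) (A : Fml) :
      Ax.T ∈ L → C.holes = 1 →
      Step L [C.fill [.node X (A ::ₘ Fml.box A ::ₘ Γ) Δ .nil]]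
        (C.fill [.node X (Fml.box A ::ₘ Γ) Δ .nil])
  /-- `R_B`. -/
  | rB (C : NCtx) (X Y : Multiset ℕ) (Γ Δ Φ Ψ : Multiset Fml) (ts : NSeqs) (A : Fml) :
      Ax.B ∈ L → C.holes = 1 →
      Step L [C.fill [.node X (A ::ₘ Γ) Δ (.cons (.node Y (Fml.box A ::ₘ Φ) Ψ ts) .nil)]]
        (C.fill [.node X Γ Δ (.cons (.node Y (Fml.box A ::ₘ Φ) Ψ ts) .nil)])
  /-- `R_4`. -/
  | r4 (C : NCtx) (X Y : Multiset ℕ) (Γ Δ Φ Ψ : Multiset Fml) (ts : NSeqs) (A : Fml) :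
      Ax.four ∈ L → C.holes = 1 →
      Step L [C.fill [.node X (Fml.box A ::ₘ Γ) Δ (.cons (.node Y (Fml.box A ::ₘ Φ) Ψ ts) .nil)]]
        (C.fill [.node X (Fml.box A ::ₘ Γ) Δ (.cons (.node Y Φ Ψ ts) .nil)])
  /-- `R_5`, with the side condition that the second hole has depth ≥ 1. -/
  | r5 (C : NCtx) (X Y : Multiset ℕ) (Γ Δ Φ Ψ : Multiset Fml) (A : Fml) :
      Ax.five ∈ L → (∃ d₁ d₂, C.holeDepths = [d₁, d₂] ∧ 1 ≤ d₂) →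
      Step L [C.fill [.node X (Fml.box A ::ₘ Γ) Δ .nil, .node Y (Fml.box A ::ₘ Φ) Ψ .nil]]
        (C.fill [.node X (Fml.box A ::ₘ Γ) Δ .nil, .node Y Φ Ψ .nil])
  /-- `R_cbf`. -/
  | rcbf (C : NCtx) (X Y : Multiset ℕ) (Γ Δ Φ Ψ : Multiset Fml) (ts : NSeqs) (x : ℕ) :
      Ax.cbf ∈ L → C.holes = 1 →
      Step L [C.fill [.node (x ::ₘ X) Γ Δ (.cons (.node (x ::ₘ Y) Φ Ψ ts) .nil)]]
        (C.fill [.node (x ::ₘ X) Γ Δ (.cons (.node Y Φ Ψ ts) .nil)])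
  /-- `R_bf`. -/
  | rbf (C : NCtx) (X Y : Multiset ℕ) (Γ Δ Φ Ψ : Multiset Fml) (ts : NSeqs) (x : ℕ) :
      Ax.bf ∈ L → C.holes = 1 →
      Step L [C.fill [.node (x ::ₘ X) Γ Δ (.cons (.node (x ::ₘ Y) Φ Ψ ts) .nil)]]
        (C.fill [.node X Γ Δ (.cons (.node (x ::ₘ Y) Φ Ψ ts) .nil)])
  /-- `R_ui`. -/
  | rui (C : NCtx) (X : Multiset ℕ) (Γ Δ : Multiset Fml) (x : ℕ) :
      Ax.ui ∈ L → C.holes = 1 →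
      Step L [C.fill [.node (x ::ₘ X) Γ Δ .nil]] (C.fill [.node X Γ Δ .nil])
  /-- `R_5dom`, present iff `5 ∈ L` and `{CBF, BF} ∩ L ≠ ∅`; both holes have depth ≥ 1. -/
  | r5dom (C : NCtx) (X Y : Multiset ℕ) (Γ Δ Φ Ψ : Multiset Fml) (x : ℕ) :
      Ax.five ∈ L → (Ax.cbf ∈ L ∨ Ax.bf ∈ L) →
      (∃ d₁ d₂, C.holeDepths = [d₁, d₂] ∧ 1 ≤ d₁ ∧ 1 ≤ d₂) →
      Step L [C.fill [.node (x ::ₘ X) Γ Δ .nil, .node (x ::ₘ Y) Φ Ψ .nil]]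
        (C.fill [.node (x ::ₘ X) Γ Δ .nil, .node Y Φ Ψ .nil])

/-- `Deriv L n S`: the nested sequent `S` is derivable in `NQ.L` with a derivation of
height at most `n`. -/
inductive Deriv (L : Set Ax) : ℕ → NSeq → Prop
  | step {n : ℕ} {ps : List NSeq} {S : NSeq} :
      Step L ps S → (∀ p ∈ ps, Deriv L n p) → Deriv L (n + 1) S

/-- `S` is `NQ.L`-derivable. -/
def Derivable (L : Set Ax) (S : NSeq) : Prop := ∃ n, Deriv L n S

end NQML

/-! Truth is preserved upwards through any one-hole context: in `fm(S{∅; ⇒ A})` the formula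
`A` occurs positively, as a disjunct of the succedent at the hole, possibly under boxes and
further disjunctions on the way to the root. So a pointwise entailment `A ⊨ B` lifts along the
path from the hole to the root. -/

namespace NQML

section Monotonicity

variable {W U : Type} (M : Model W U) (σ : ℕ → U)

theorem Model.sat_disj {w : W} {P Q : Fml} :
    M.sat σ w (Fml.disj P Q) ↔ M.sat σ w P ∨ M.sat σ w Q := by
  change ((M.sat σ w P → False) → M.sat σ w Q) ↔ _
  tauto

theorem Model.sat_listDisj {w : W} : ∀ l : List Fml,
    M.sat σ w (listDisj l) ↔ ∃ F ∈ l, M.sat σ w F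
  | [] => by simp [listDisj, Model.sat]
  | F :: l => by simp [listDisj, Model.sat_disj, Model.sat_listDisj l]

theorem Model.sat_fmDisj_cons {w : W} {s : NSeq} {ss : NSeqs} :
    M.sat σ w (NSeqs.fmDisj (.cons s ss)) ↔
      (∀ v, M.Rel w v → M.sat σ v s.fm) ∨ M.sat σ w ss.fmDisj :=
  Model.sat_disj M σ

theorem Model.sat_fm_node_add_singleton_mono {w : W} {X : Multiset ℕ} {Γ Δ : Multiset Fml}
    {cs : NSeqs} {A B : Fml} (hAB : M.sat σ w A → M.sat σ w B)
    (hA : M.sat σ w (NSeq.node X Γ (Δ + {A}) cs).fm) :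
    M.sat σ w (NSeq.node X Γ (Δ + {B}) cs).fm := by
  simp only [NSeq.fm, Model.sat_disj] at hA ⊢
  refine hA.imp_left fun hsucc hant => ?_
  have hsucc := hsucc hant
  simp only [Model.sat_listDisj, Multiset.mem_toList, Multiset.mem_add,
    Multiset.mem_singleton] at hsucc ⊢
  obtain ⟨F, hF | rfl, hFw⟩ := hsucc
  · exact ⟨F, .inl hF, hFw⟩
  · exact ⟨B, .inr rfl, hAB hFw⟩

variable {M σ} {A B : Fml}

mutual

theorem NCtx.sat_fm_fill_mono (hAB : ∀ v, M.sat σ v A → M.sat σ v B) :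
    ∀ C : NCtx, C.holes = 1 → ∀ w,
      M.sat σ w (C.fill [.node 0 0 {A} .nil]).fm → M.sat σ w (C.fill [.node 0 0 {B} .nil]).fm
  | .node X Γ Δ 0 cs, hC, w, hA => by
    simp only [NCtx.holes, Nat.zero_add] at hC
    simp only [NCtx.fill, List.take_zero, List.drop_zero, List.foldl_nil, NSeq.fm,
      Model.sat_disj] at hA ⊢
    exact hA.imp_right (NCtxs.sat_fmDisj_fill_mono hAB cs hC w)
  | .node X Γ Δ (k + 1) cs, hC, w, hA => by
    obtain rfl : k = 0 := by simp only [NCtx.holes] at hC; omega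
    exact Model.sat_fm_node_add_singleton_mono M σ (hAB w) hA

theorem NCtxs.sat_fmDisj_fill_mono (hAB : ∀ v, M.sat σ v A → M.sat σ v B) :
    ∀ cs : NCtxs, cs.holes = 1 → ∀ w,
      M.sat σ w (cs.fill [.node 0 0 {A} .nil]).fmDisj →
        M.sat σ w (cs.fill [.node 0 0 {B} .nil]).fmDisj
  | .nil, hcs, _, _ => by simp [NCtxs.holes] at hcs
  | .cons c cs, hcs, w, hA => by
    simp only [NCtxs.holes] at hcs
    simp only [NCtxs.fill, Model.sat_fmDisj_cons] at hA ⊢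
    obtain hc | hc : c.holes = 0 ∨ c.holes = 1 := by omega
    · rw [hc] at hA ⊢
      simp only [List.take_zero, List.drop_zero] at hA ⊢
      exact hA.imp_right (NCtxs.sat_fmDisj_fill_mono hAB cs (by omega) w)
    · rw [hc] at hA ⊢
      simp only [List.take_succ_cons, List.take_zero, List.drop_succ_cons, List.drop_zero]
        at hA ⊢
      exact hA.imp_left fun hbox v hwv => NCtx.sat_fm_fill_mono hAB c hc v (hbox v hwv)

end

end Monotonicity

/-- **Soundness of nested rule application**: for every context `S{·}` with one hole and
all 𝓛-formulas `A` and `B`, if `A ⊃ B` is `Q.L`-valid then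
`fm(S{∅; ⇒ A}) ⊃ fm(S{∅; ⇒ B})` is `Q.L`-valid. -/
theorem nested_application_sound (L : Set Ax) (C : NCtx) (hC : C.holes = 1)
    (A B : Fml) (h : Valid L (Fml.imp A B)) :
    Valid L (Fml.imp (C.fill [.node 0 0 {A} .nil]).fm
                     (C.fill [.node 0 0 {B} .nil]).fm) :=
  fun W U M hF σ hσ w => NCtx.sat_fm_fill_mono (fun v => h W U M hF σ hσ v) C hC w

end NQML
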